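/- arXiv:1810.00276 — 5 statements merged into one kernel-verified Lean document; each statement's English description precedes it below -/
import Mathlib

section
/- Let δ ∈ [0,1], τ₂ > 0, and let g, c > 0. Define γ₂ = δ·c·g / ((1−δ)·c·g + c·σ² + 1) with σ² ≥ 0. If δ ≤ τ₂/(τ₂+1), then γ₂ < τ₂ for all g > 0; i.e., the outage condition γ₂ ≥ τ₂ is impossible. -/
/-! Since `δ ≤ τ₂ / (τ₂ + 1)` is the same as `δ ≤ τ₂ (1 - δ)`, the signal term `δ c g` is at most
`τ₂` times the interference term `(1 - δ) c g`, while the noise term `c σ² + 1` is strictly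
positive; so the SINR stays strictly below `τ₂` whatever the channel gain. -/

lemma le_mul_one_sub_of_le_div_add_one {δ τ : ℝ} (hτ : 0 < τ + 1) (h : δ ≤ τ / (τ + 1)) :
    δ ≤ τ * (1 - δ) := by
  rw [le_div_iff₀ hτ] at h
  linarith

lemma mul_div_mul_add_lt {a b x e τ : ℝ} (hab : a ≤ τ * b) (hb : 0 ≤ b) (hx : 0 ≤ x)
    (he : 0 < e) (hτ : 0 < τ) : a * x / (b * x + e) < τ := by
  rw [div_lt_iff₀ (by positivity)]
  calc a * x ≤ τ * b * x := mul_le_mul_of_nonneg_right hab hx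
    _ < τ * b * x + τ * e := lt_add_of_pos_right _ (mul_pos hτ he)
    _ = τ * (b * x + e) := by ring

theorem weak_user_outage_certain_general (δ τ₂ c σ2 : ℝ)
    (hτ₂ : 0 < τ₂) (hc : 0 < c) (hσ : 0 ≤ σ2)
    (hδle : δ ≤ τ₂ / (τ₂ + 1)) :
    ∀ g : ℝ, 0 < g → δ * c * g / ((1 - δ) * c * g + c * σ2 + 1) < τ₂ := by
  intro g hg
  have hδ : δ < 1 := hδle.trans_lt ((div_lt_one (by linarith)).2 (by linarith))
  have hsinr := mul_div_mul_add_lt (x := c * g) (e := c * σ2 + 1)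
    (le_mul_one_sub_of_le_div_add_one (by linarith) hδle) (by linarith) (by positivity)
    (by positivity) hτ₂
  simpa only [mul_assoc, add_assoc] using hsinr

theorem weak_user_outage_certain (δ τ₂ c σ2 : ℝ)
    (hδ0 : 0 ≤ δ) (hδ1 : δ ≤ 1) (hτ₂ : 0 < τ₂) (hc : 0 < c) (hσ : 0 ≤ σ2)
    (hδle : δ ≤ τ₂ / (τ₂ + 1)) :
    ∀ g : ℝ, 0 < g → δ * c * g / ((1 - δ) * c * g + c * σ2 + 1) < τ₂ :=
  weak_user_outage_certain_general δ τ₂ c σ2 hτ₂ hc hσ hδle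
end

section
/- For a > 0, b > 0 and nonnegative integer n, ∫₀^∞ z^n · exp(−a/z − b·z) dz = 2·(a/b)^{(n+1)/2} · K_{n+1}(2√(ab)), where K_ν denotes the modified Bessel function of the second kind. -/
/-!
Substituting `z = √(a/b) eᵗ` turns `a/z + b z` into `2√(ab) cosh t` and `z^s dz` into
`(a/b)^((s+1)/2) e^((s+1)t) dt`, so the integral becomes
`(a/b)^((s+1)/2) ∫_ℝ e^(νt - x cosh t) dt` with `ν = s + 1` and `x = 2√(ab)`. Averaging over
`t ↦ -t` replaces `e^(νt)` by `cosh (νt)`, and the resulting even integrand integrates to twice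
its integral over `(0, ∞)`, i.e. to `2 K_ν(x)`.
-/

open MeasureTheory Real

/-- The modified Bessel function of the second kind `K_ν`, via its standard
integral representation `K_ν(x) = ∫₀^∞ e^{-x cosh t} cosh (ν t) dt`. -/
noncomputable def besselK (ν x : ℝ) : ℝ :=
  ∫ t in Set.Ioi (0 : ℝ), exp (-x * cosh t) * cosh (ν * t)

open Set

lemma sq_div_four_le_cosh (t : ℝ) : t ^ 2 / 4 ≤ cosh t := by
  rw [← cosh_abs, cosh_eq]
  have h1 := quadratic_le_exp_of_nonneg (abs_nonneg t)
  have h2 := add_one_le_exp (-|t|)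
  nlinarith [sq_abs t]

lemma integrable_exp_neg_mul_sq_add_mul {b : ℝ} (hb : 0 < b) (c : ℝ) :
    Integrable fun t : ℝ => exp (-b * t ^ 2 + c * t) := by
  have := (integrable_cexp_quadratic (b := (b : ℂ)) (by simpa using hb) c 0).norm
  simpa [Complex.norm_exp, ← Complex.ofReal_pow] using this

lemma integrable_exp_mul_sub_mul_cosh {x : ℝ} (hx : 0 < x) (ν : ℝ) :
    Integrable fun t : ℝ => exp (ν * t - x * cosh t) := by
  refine (integrable_exp_neg_mul_sq_add_mul (by positivity : 0 < x / 4) ν).mono'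
    (by fun_prop) (ae_of_all _ fun t => ?_)
  rw [norm_eq_abs, abs_exp, exp_le_exp]
  nlinarith [sq_div_four_le_cosh t]

lemma integral_exp_mul_sub_mul_cosh {x : ℝ} (hx : 0 < x) (ν : ℝ) :
    ∫ t : ℝ, exp (ν * t - x * cosh t) = 2 * besselK ν x := by
  set g : ℝ → ℝ := fun t => exp (ν * t - x * cosh t)
  set h : ℝ → ℝ := fun t => exp (-x * cosh t) * cosh (ν * t)
  have hg : Integrable g := integrable_exp_mul_sub_mul_cosh hx ν
  have h_symm : ∀ t, g t + g (-t) = 2 * h t := by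
    intro t
    simp only [g, h, cosh_neg, mul_neg]
    rw [cosh_eq (ν * t), sub_eq_add_neg, sub_eq_add_neg, exp_add, exp_add, neg_mul]
    ring
  have h_even : ∀ t, h |t| = h t := by
    intro t
    rcases abs_choice t with e | e <;> simp only [h, e, cosh_neg, mul_neg]
  calc ∫ t, g t = (∫ t, (g t + g (-t))) / 2 := by
        rw [integral_add hg hg.comp_neg, integral_neg_eq_self g volume]; ring
    _ = ∫ t, h |t| := by simp only [h_symm, h_even, integral_const_mul]; ring
    _ = 2 * besselK ν x := integral_comp_abs

lemma integral_comp_mul_exp {E : Type*} [NormedAddCommGroup E] [NormedSpace ℝ E]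
    (g : ℝ → E) {c : ℝ} (hc : 0 < c) :
    ∫ t : ℝ, (c * exp t) • g (c * exp t) = ∫ z in Ioi 0, g z := by
  have h_image : (fun t => c * exp t) '' univ = Ioi 0 := by
    rw [← image_image (c * ·) exp, image_univ, range_exp, image_mul_left_Ioi hc, mul_zero]
  have h_inj : InjOn (fun t => c * exp t) univ :=
    ((mul_right_injective₀ hc.ne').comp exp_injective).injOn
  rw [← h_image, integral_image_eq_integral_abs_deriv_smul MeasurableSet.univ
    (fun t _ => ((hasDerivAt_exp t).const_mul c).hasDerivWithinAt) h_inj, setIntegral_univ]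
  simp only [abs_of_pos (mul_pos hc (exp_pos _))]

theorem integral_rpow_mul_exp_neg_div_sub_mul {a b : ℝ} (ha : 0 < a) (hb : 0 < b) (s : ℝ) :
    ∫ z in Ioi 0, z ^ s * exp (-a / z - b * z) =
      2 * (a / b) ^ ((s + 1) / 2) * besselK (s + 1) (2 * √(a * b)) := by
  set c := √(a / b) with hc_def
  have hc : 0 < c := sqrt_pos.mpr (div_pos ha hb)
  have hc_sq : c ^ 2 = a / b := sq_sqrt (div_pos ha hb).le
  have hbc : b * c = √(a * b) := by
    rw [← sqrt_sq (by positivity : 0 ≤ b * c), mul_pow, hc_sq]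
    field_simp
  have h_exponent : ∀ t, -a / (c * exp t) - b * (c * exp t) = -(2 * √(a * b) * cosh t) := by
    intro t
    have hac : a = b * c ^ 2 := by rw [hc_sq]; field_simp
    rw [cosh_eq, exp_neg, ← hbc, hac]
    field_simp
    ring
  have h_integrand : ∀ t,
      (c * exp t) • ((c * exp t) ^ s * exp (-a / (c * exp t) - b * (c * exp t))) =
        c ^ (s + 1) * exp ((s + 1) * t - 2 * √(a * b) * cosh t) := by
    intro t
    rw [h_exponent, mul_rpow hc.le (exp_pos t).le, ← exp_mul, mul_comm t s, rpow_add_one hc.ne',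
      smul_eq_mul, sub_eq_add_neg, exp_add, add_one_mul, exp_add]
    ring
  have h_const : c ^ (s + 1) = (a / b) ^ ((s + 1) / 2) := by
    rw [hc_def, sqrt_eq_rpow, ← rpow_mul (div_pos ha hb).le, one_div_mul_eq_div]
  rw [← integral_comp_mul_exp _ hc]
  have hx : 0 < 2 * √(a * b) := by positivity
  simp only [h_integrand, integral_const_mul, integral_exp_mul_sub_mul_cosh hx, h_const]
  ring

theorem bessel_integral_GR_3_471_9 (a b : ℝ) (n : ℕ) (ha : 0 < a) (hb : 0 < b) :
    ∫ z in Set.Ioi (0 : ℝ), z ^ n * exp (-a / z - b * z) =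
      2 * (a / b) ^ (((n : ℝ) + 1) / 2) * besselK (n + 1) (2 * Real.sqrt (a * b)) := by
  simp only [← rpow_natCast]
  exact integral_rpow_mul_exp_neg_div_sub_mul ha hb n
end

section
/- Let g be exponential with mean d^{−α} (d, α > 0), let g₂ be exponential with mean Ω₂ > 0, independent of g, and let P, η, τ₀, σ² > 0. Then P( g > τ₀/P and g₂ > τ₀(σ² + 1/(η(Pg − τ₀))) ) = e^{−σ²τ₀/Ω₂ − τ₀ d^α/P} · ω·K₁(ω), where ω = 2√(τ₀/(η P d^{−α} Ω₂)). -/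
open MeasureTheory ProbabilityTheory Real

/-!
Given `g = x > τ₀/P`, the event has probability `exp (-(σ²τ₀ + τ₀/(η(Px - τ₀)))/Ω₂)`, so the
answer is a one-dimensional integral against the exponential density of `g`. After the shift
`x = τ₀/P + v` it has the shape `∫₀^∞ exp (-a/v - b v) dv`, and the substitution `v = √(a/b) eᵗ`,
`t ∈ ℝ`, turns this into `√(a/b) ∫_ℝ eᵗ exp (-2√(ab) cosh t) dt`; folding `t ↦ -t` replaces `eᵗ`
by `2 cosh t` on `t > 0`, which is `2√(a/b) K₁(2√(ab))`.

All integrals are lower Lebesgue integrals, so integrability is needed only once, to identify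
the Bochner integral defining `K₁`.
-/

open Set Filter Topology

theorem measure_mem_and_lt_eq_setLIntegral {Ω : Type*} [MeasurableSpace Ω] {μ : Measure Ω}
    [IsFiniteMeasure μ] {X Y : Ω → ℝ} (hX : Measurable X) (hY : Measurable Y)
    (hXY : IndepFun X Y μ) {s : Set ℝ} (hs : MeasurableSet s) {φ : ℝ → ℝ} (hφ : Measurable φ) :
    μ {ω | X ω ∈ s ∧ φ (X ω) < Y ω} = ∫⁻ x in s, μ.map Y (Ioi (φ x)) ∂μ.map X := by
  set S : Set (ℝ × ℝ) := {p | p.1 ∈ s ∧ φ p.1 < p.2}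
  have hS : MeasurableSet S :=
    (measurable_fst hs).inter (measurableSet_lt (hφ.comp measurable_fst) measurable_snd)
  have hsection :
      ∀ x, μ.map Y (Prod.mk x ⁻¹' S) = s.indicator (fun x => μ.map Y (Ioi (φ x))) x := by
    intro x
    by_cases hx : x ∈ s <;> simp [S, hx, indicator, Ioi_def]
  rw [← lintegral_indicator hs, ← funext hsection, ← Measure.prod_apply hS,
    ← (indepFun_iff_map_prod_eq_prod_map_map hX.aemeasurable hY.aemeasurable).mp hXY,
    Measure.map_apply (hX.prodMk hY) hS]
  rfl

theorem lintegral_eq_setLIntegral_Ioi_add_comp_neg (f : ℝ → ENNReal) :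
    ∫⁻ t, f t = (∫⁻ t in Ioi 0, f t) + ∫⁻ t in Ioi 0, f (-t) := by
  have hIic : ∫⁻ t in Iic 0, f t = ∫⁻ t in Ioi 0, f (-t) := by
    rw [setLIntegral_congr Ioi_ae_eq_Ici, ← lintegral_indicator measurableSet_Iic,
      ← lintegral_indicator measurableSet_Ici, ← lintegral_neg_eq_self]
    congr 1 with t
    simp [indicator]
  rw [← lintegral_add_compl f measurableSet_Ioi, compl_Ioi, hIic]

theorem expMeasure_Ioi {r y : ℝ} (hr : 0 < r) (hy : 0 ≤ y) :
    expMeasure r (Ioi y) = ENNReal.ofReal (exp (-(r * y))) := by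
  have := isProbabilityMeasure_expMeasure hr
  have hexp : exp (-(r * y)) ≤ 1 := exp_le_one_iff.mpr (by nlinarith)
  rw [← compl_Iic, prob_compl_eq_one_sub measurableSet_Iic, ← ofReal_cdf, cdf_expMeasure_eq hr,
    if_pos hy, ← ENNReal.ofReal_one, ← ENNReal.ofReal_sub _ (by linarith), sub_sub_cancel]

theorem setLIntegral_expMeasure {r : ℝ} {s : Set ℝ} (hs : MeasurableSet s) (hs₀ : s ⊆ Ici 0)
    {f : ℝ → ENNReal} (hf : Measurable f) :
    ∫⁻ x in s, f x ∂expMeasure r = ∫⁻ x in s, ENNReal.ofReal (r * exp (-(r * x))) * f x := by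
  rw [show expMeasure r = volume.withDensity (exponentialPDF r) from rfl,
    setLIntegral_withDensity_eq_setLIntegral_mul _
      (f := exponentialPDF r) (measurable_exponentialPDFReal r).ennreal_ofReal hf hs]
  exact setLIntegral_congr_fun hs fun x hx => by
    rw [Pi.mul_apply, exponentialPDF_of_nonneg (hs₀ hx)]

theorem integrableOn_Ioi_cosh_mul_exp_neg_mul_cosh {x : ℝ} (hx : 0 < x) :
    IntegrableOn (fun t => cosh t * exp (-(x * cosh t))) (Ioi 0) := by
  have hderiv : ∀ t ∈ Ici (0 : ℝ), HasDerivAt (fun t => -(exp (-(x * sinh t)) / x))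
      (cosh t * exp (-(x * sinh t))) t := fun t _ => by
    refine ((((hasDerivAt_sinh t).const_mul x).fun_neg.exp.div_const x).fun_neg).congr_deriv ?_
    field_simp
  have hlim : Tendsto (fun t => -(exp (-(x * sinh t)) / x)) atTop (𝓝 (-(0 / x))) := by
    have hsinh : Tendsto sinh atTop atTop :=
      tendsto_atTop_mono' _ ((eventually_ge_atTop 0).mono fun t => self_le_sinh_iff.mpr) tendsto_id
    exact ((tendsto_exp_atBot.comp (tendsto_neg_atTop_atBot.comp
      (hsinh.const_mul_atTop hx))).div_const x).neg
  refine (integrableOn_Ioi_deriv_of_nonneg' hderiv (fun t _ => by positivity)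
    (by simpa using hlim)).mono' (by fun_prop) (ae_of_all _ fun t => ?_)
  rw [norm_of_nonneg (by positivity)]
  gcongr
  exact (sinh_lt_cosh t).le

theorem ofReal_besselK_one {x : ℝ} (hx : 0 < x) :
    ENNReal.ofReal (besselK 1 x) =
      ∫⁻ t in Ioi 0, ENNReal.ofReal (cosh t * exp (-(x * cosh t))) := by
  rw [besselK, ← ofReal_integral_eq_lintegral_ofReal (integrableOn_Ioi_cosh_mul_exp_neg_mul_cosh hx)
    (ae_of_all _ fun t => by positivity)]
  simp_rw [one_mul, neg_mul, mul_comm]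

theorem lintegral_Ioi_exp_neg_div_sub_mul {a b : ℝ} (ha : 0 < a) (hb : 0 < b) :
    ∫⁻ v in Ioi 0, ENNReal.ofReal (exp (-(a / v) - b * v)) =
      ENNReal.ofReal (2 * √(a / b) * besselK 1 (2 * √(a * b))) := by
  set c := √(a / b)
  have hc : 0 < c := by positivity
  have hac : a = b * c ^ 2 := by rw [sq_sqrt (by positivity)]; field_simp
  have hx : √(a * b) = b * c := by
    rw [hac, show b * c ^ 2 * b = (b * c) ^ 2 by ring, sqrt_sq (by positivity)]
  rw [hx]
  have hrange : (fun t => c * exp t) '' univ = Ioi 0 := by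
    rw [← image_image (c * ·) exp, image_univ, range_exp, image_mul_left_Ioi hc, mul_zero]
  have hcosh : ∀ t, exp (-(a / (c * exp t)) - b * (c * exp t)) = exp (-(2 * (b * c) * cosh t)) := by
    intro t
    congr 1
    rw [hac, cosh_eq, exp_neg]
    field_simp
    ring
  calc ∫⁻ v in Ioi 0, ENNReal.ofReal (exp (-(a / v) - b * v))
      = ∫⁻ t, ENNReal.ofReal (c * exp t) * ENNReal.ofReal (exp (-(2 * (b * c) * cosh t))) := by
        rw [← hrange, lintegral_image_eq_lintegral_abs_deriv_mul MeasurableSet.univ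
          (fun t _ => ((hasDerivAt_exp t).const_mul c).hasDerivWithinAt)
          (fun _ _ _ _ h => exp_injective (mul_left_cancel₀ hc.ne' h)), Measure.restrict_univ]
        simp_rw [hcosh, abs_of_pos (mul_pos hc (exp_pos _))]
    _ = ∫⁻ t in Ioi 0, ENNReal.ofReal (2 * c) *
          ENNReal.ofReal (cosh t * exp (-(2 * (b * c) * cosh t))) := by
        rw [lintegral_eq_setLIntegral_Ioi_add_comp_neg, ← lintegral_add_left (by fun_prop)]
        congr 1 with t
        rw [cosh_neg, ← add_mul, ← ENNReal.ofReal_add (by positivity) (by positivity),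
          ← ENNReal.ofReal_mul (by positivity), ← ENNReal.ofReal_mul (by positivity),
          ← mul_assoc (2 * c)]
        congr 2
        rw [cosh_eq]
        ring
    _ = ENNReal.ofReal (2 * c * besselK 1 (2 * (b * c))) := by
        rw [lintegral_const_mul' _ _ ENNReal.ofReal_ne_top, ← ofReal_besselK_one (by positivity),
          ← ENNReal.ofReal_mul (by positivity)]

theorem setLIntegral_Ioi_expMeasure_exp_neg_div_sub {r s c : ℝ} (hr : 0 < r) (hs : 0 < s)
    (hc : 0 ≤ c) :
    ∫⁻ x in Ioi c, ENNReal.ofReal (exp (-(s / (x - c)))) ∂expMeasure r =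
      ENNReal.ofReal (exp (-(r * c)) * (2 * √(r * s)) * besselK 1 (2 * √(r * s))) := by
  have hsqrt : r * √(s / r) = √(r * s) := by
    rw [← sqrt_sq hr.le, ← sqrt_mul (sq_nonneg r), sqrt_sq hr.le]
    field_simp
  have hshift : ∀ v ∈ Ioi (0 : ℝ),
      ENNReal.ofReal |1| * (ENNReal.ofReal (r * exp (-(r * (v + c)))) *
        ENNReal.ofReal (exp (-(s / (v + c - c))))) =
      ENNReal.ofReal (r * exp (-(r * c))) * ENNReal.ofReal (exp (-(s / v) - r * v)) := by
    intro v _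
    rw [abs_one, ENNReal.ofReal_one, one_mul, add_sub_cancel_right,
      ← ENNReal.ofReal_mul (by positivity), ← ENNReal.ofReal_mul (by positivity), mul_assoc,
      mul_assoc, ← exp_add, ← exp_add]
    congr 3
    ring
  have himage : (fun v => v + c) '' Ioi 0 = Ioi c := by simp
  rw [setLIntegral_expMeasure measurableSet_Ioi (Ioi_subset_Ici hc) (by fun_prop),
    ← himage, lintegral_image_eq_lintegral_abs_deriv_mul
      measurableSet_Ioi (fun v _ => ((hasDerivAt_id' v).add_const c).hasDerivWithinAt)
      (add_left_injective c).injOn, setLIntegral_congr_fun measurableSet_Ioi hshift,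
    lintegral_const_mul' _ _ ENNReal.ofReal_ne_top, lintegral_Ioi_exp_neg_div_sub_mul hs hr,
    ← ENNReal.ofReal_mul (by positivity), mul_comm s r, ← hsqrt]
  congr 1
  ring

theorem dpa_weak_user_success_probability_general {Ω : Type*} [MeasurableSpace Ω]
    (μ : Measure Ω) [IsProbabilityMeasure μ]
    (g g₂ : Ω → ℝ) (hg : Measurable g) (hg₂ : Measurable g₂)
    (d α Ω₂ P η τ₀ σ2 : ℝ)
    (hd : 0 < d) (hΩ₂ : 0 < Ω₂) (hP : 0 < P) (hη : 0 < η)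
    (hτ₀ : 0 < τ₀) (hσ : 0 < σ2)
    (hind : IndepFun g g₂ μ)
    (hdg : Measure.map g μ = expMeasure (1 / d ^ (-α)))
    (hdg₂ : Measure.map g₂ μ = expMeasure (1 / Ω₂)) :
    μ {ω | τ₀ / P < g ω ∧ τ₀ * (σ2 + 1 / (η * (P * g ω - τ₀))) < g₂ ω} =
      ENNReal.ofReal (exp (-(σ2 * τ₀ / Ω₂) - τ₀ * d ^ α / P) *
        (2 * Real.sqrt (τ₀ / (η * P * d ^ (-α) * Ω₂))) *
        besselK 1 (2 * Real.sqrt (τ₀ / (η * P * d ^ (-α) * Ω₂)))) := by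
  have hsurvival : ∀ x ∈ Ioi (τ₀ / P),
      expMeasure (1 / Ω₂) (Ioi (τ₀ * (σ2 + 1 / (η * (P * x - τ₀))))) =
        ENNReal.ofReal (exp (-(σ2 * τ₀ / Ω₂))) *
          ENNReal.ofReal (exp (-(τ₀ / (η * P * Ω₂) / (x - τ₀ / P)))) := by
    intro x hx
    have hx' : 0 < P * x - τ₀ := by rw [mem_Ioi, div_lt_iff₀ hP] at hx; linarith
    rw [expMeasure_Ioi (by positivity) (by positivity), ← ENNReal.ofReal_mul (by positivity),
      ← exp_add]
    congr 2
    field_simp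
    ring
  refine (measure_mem_and_lt_eq_setLIntegral hg hg₂ hind measurableSet_Ioi
    (φ := fun x => τ₀ * (σ2 + 1 / (η * (P * x - τ₀)))) (by fun_prop)).trans ?_
  rw [hdg, hdg₂, setLIntegral_congr_fun measurableSet_Ioi hsurvival,
    lintegral_const_mul' _ _ ENNReal.ofReal_ne_top,
    setLIntegral_Ioi_expMeasure_exp_neg_div_sub (by positivity) (by positivity) (by positivity),
    ← ENNReal.ofReal_mul (by positivity)]
  have hrate : 1 / d ^ (-α) = d ^ α := by rw [rpow_neg hd.le, one_div, inv_inv]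
  have harg : 1 / d ^ (-α) * (τ₀ / (η * P * Ω₂)) = τ₀ / (η * P * d ^ (-α) * Ω₂) := by
    field_simp
  rw [harg, hrate, show -(σ2 * τ₀ / Ω₂) - τ₀ * d ^ α / P = -(σ2 * τ₀ / Ω₂) + -(d ^ α * (τ₀ / P))
    by ring, exp_add]
  congr 1
  ring

theorem dpa_weak_user_success_probability {Ω : Type*} [MeasurableSpace Ω]
    (μ : Measure Ω) [IsProbabilityMeasure μ]
    (g g₂ : Ω → ℝ) (hg : Measurable g) (hg₂ : Measurable g₂)
    (d α Ω₂ P η τ₀ σ2 : ℝ)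
    (hd : 0 < d) (hα : 0 < α) (hΩ₂ : 0 < Ω₂) (hP : 0 < P) (hη : 0 < η)
    (hτ₀ : 0 < τ₀) (hσ : 0 < σ2)
    (hind : IndepFun g g₂ μ)
    (hdg : Measure.map g μ = expMeasure (1 / d ^ (-α)))
    (hdg₂ : Measure.map g₂ μ = expMeasure (1 / Ω₂)) :
    μ {ω | τ₀ / P < g ω ∧ τ₀ * (σ2 + 1 / (η * (P * g ω - τ₀))) < g₂ ω} =
      ENNReal.ofReal (exp (-(σ2 * τ₀ / Ω₂) - τ₀ * d ^ α / P) *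
        (2 * Real.sqrt (τ₀ / (η * P * d ^ (-α) * Ω₂))) *
        besselK 1 (2 * Real.sqrt (τ₀ / (η * P * d ^ (-α) * Ω₂)))) :=
  dpa_weak_user_success_probability_general μ g g₂ hg hg₂ d α Ω₂ P η τ₀ σ2 hd hΩ₂ hP hη hτ₀ hσ hind
    hdg hdg₂
end

section
/- Let δ ∈ (0,1), τ₁ > 0, σ_ic² > 0 with δ ≥ 1/(τ₁σ_ic² + 1). Then for every g₁ > 0, c > 0, σ² ≥ 0, the imperfect-SIC SINR (1−δ)·c·g₁/(c·σ² + c·δ·g₁·σ_ic² + 1) is strictly less than τ₁; i.e., the strong user is always in outage. -/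
/-!
Residual interference alone caps the SINR: the signal `(1 - δ) c g₁` is at most
`τ₁ · c δ g₁ σic` exactly when `δ ≥ 1 / (τ₁ σic + 1)`, and the positive noise term `1` in the
denominator makes the inequality strict.
-/

theorem one_sub_le_mul_of_one_div_add_one_le {x δ : ℝ} (hx : 0 < x + 1)
    (h : 1 / (x + 1) ≤ δ) : 1 - δ ≤ x * δ := by
  rw [div_le_iff₀ hx] at h
  linarith

theorem div_add_lt_of_le_mul {S I N τ : ℝ} (hτ : 0 < τ) (hI : 0 ≤ I) (hN : 0 < N)
    (h : S ≤ τ * I) : S / (I + N) < τ := by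
  rw [div_lt_iff₀ (by positivity)]
  nlinarith

theorem imperfect_sic_always_outage (δ τ₁ σic : ℝ)
    (hδ : δ ∈ Set.Ioo (0 : ℝ) 1) (hτ₁ : 0 < τ₁) (hσic : 0 < σic)
    (hδge : 1 / (τ₁ * σic + 1) ≤ δ) :
    ∀ g₁ c σ2 : ℝ, 0 < g₁ → 0 < c → 0 ≤ σ2 →
      (1 - δ) * c * g₁ / (c * σ2 + c * δ * g₁ * σic + 1) < τ₁ := by
  intro g₁ c σ2 hg₁ hc hσ2
  have hδ0 : 0 < δ := hδ.1
  have hresidual : 1 - δ ≤ τ₁ * σic * δ :=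
    one_sub_le_mul_of_one_div_add_one_le (by positivity) hδge
  have hsignal : (1 - δ) * c * g₁ ≤ τ₁ * (c * δ * g₁ * σic) := by
    calc (1 - δ) * c * g₁ = (1 - δ) * (c * g₁) := by ring
      _ ≤ τ₁ * σic * δ * (c * g₁) := by gcongr
      _ = τ₁ * (c * δ * g₁ * σic) := by ring
  rw [show c * σ2 + c * δ * g₁ * σic + 1 = c * δ * g₁ * σic + (c * σ2 + 1) by ring]
  exact div_add_lt_of_le_mul hτ₁ (by positivity) (by positivity) hsignal
end

section
/- Let τ₀ = τ₁ + τ₂ + τ₁τ₂ with τ₁, τ₂ > 0 and σ_ic² ≥ 0. Define Φ₁ = τ₂/(δ(τ₂+1) − τ₂) and Φ₂′ = τ₁/(1 − δ(τ₁σ_ic² + 1)) for δ ∈ (τ₂/(τ₂+1), 1/(τ₁σ_ic²+1)). Then Φ₁ ≥ Φ₂′ if and only if δ ≤ (τ₀ − τ₁)/(τ₀ + τ₁τ₂σ_ic²). When σ_ic² = 0 this threshold reduces to (τ₀ − τ₁)/τ₀. -/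
theorem div_le_div_sub_iff_le_div {t₁ t₂ a b δ : ℝ} (hA : 0 < δ * a - t₂) (hB : 0 < 1 - δ * b)
    (hD : 0 < t₁ * a + t₂ * b) :
    t₁ / (1 - δ * b) ≤ t₂ / (δ * a - t₂) ↔ δ ≤ (t₂ + t₁ * t₂) / (t₁ * a + t₂ * b) := by
  rw [div_le_div_iff₀ hB hA, le_div_iff₀ hD]
  constructor <;> intro h <;> linarith

theorem imperfect_sic_threshold (τ₀ τ₁ τ₂ σic δ : ℝ)
    (hτ₁ : 0 < τ₁) (hτ₂ : 0 < τ₂) (hσic : 0 ≤ σic)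
    (hτ₀ : τ₀ = τ₁ + τ₂ + τ₁ * τ₂)
    (hδ : δ ∈ Set.Ioo (τ₂ / (τ₂ + 1)) (1 / (τ₁ * σic + 1))) :
    (τ₁ / (1 - δ * (τ₁ * σic + 1)) ≤ τ₂ / (δ * (τ₂ + 1) - τ₂) ↔
        δ ≤ (τ₀ - τ₁) / (τ₀ + τ₁ * τ₂ * σic)) ∧
      (σic = 0 → (τ₀ - τ₁) / (τ₀ + τ₁ * τ₂ * σic) = (τ₀ - τ₁) / τ₀) := by
  obtain ⟨hlo, hhi⟩ := hδ
  have hA : 0 < δ * (τ₂ + 1) - τ₂ := sub_pos.2 ((div_lt_iff₀ (by positivity)).1 hlo)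
  have hB : 0 < 1 - δ * (τ₁ * σic + 1) := sub_pos.2 ((lt_div_iff₀ (by positivity)).1 hhi)
  have hthreshold : (τ₀ - τ₁) / (τ₀ + τ₁ * τ₂ * σic) =
      (τ₂ + τ₁ * τ₂) / (τ₁ * (τ₂ + 1) + τ₂ * (τ₁ * σic + 1)) := by
    subst hτ₀; congr 1 <;> ring
  refine ⟨?_, fun hσ => by simp [hσ]⟩
  rw [hthreshold]
  exact div_le_div_sub_iff_le_div hA hB (by positivity)
end
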